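/- Let |ψ₀⟩, |ψ₁⟩ be purifications on H_A ⊗ H_R of density matrices ρ₀, ρ₁ of rank at most 2^r, let X := Tr_A(|ψ₀⟩⟨ψ₁|), and let P be an odd polynomial with |P(x)| ≤ 1 on [−1,1] and |1 − P(x)| ≤ Cε for x ∈ (δ,1]. Then |⟨ψ₀|(I ⊗ (sgn^(SV)(X) − P^(SV)(X)))|ψ₁⟩| ≤ 2^{r+1}δ + Cε, where P^(SV) and sgn^(SV) act on the singular values of X. -/

import Mathlib

open Matrix ComplexOrder
open scoped Matrix.Norms.L2Operator Kronecker

noncomputable section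

variable {m : Type*} [Fintype m] [DecidableEq m]

/-- The square root of a positive semidefinite matrix (as in the older Mathlib). -/
def Matrix.PosSemidef.sqrt {A : Matrix m m ℂ} (hA : A.PosSemidef) : Matrix m m ℂ :=
  hA.1.eigenvectorUnitary.1 * diagonal ((↑) ∘ (√·) ∘ hA.1.eigenvalues) *
    (star hA.1.eigenvectorUnitary : Matrix m m ℂ)

/-- A density matrix: positive semidefinite with unit trace. -/
def IsDensity (ρ : Matrix m m ℂ) : Prop := ρ.PosSemidef ∧ ρ.trace = 1

/-- The trace norm `‖A‖₁ = Tr √(AᴴA)`. -/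
def traceNorm (A : Matrix m m ℂ) : ℝ :=
  ((Matrix.posSemidef_conjTranspose_mul_self A).sqrt).trace.re

/-- The trace distance `T(ρ,σ) = ‖ρ − σ‖₁ / 2`. -/
def traceDist (ρ σ : Matrix m m ℂ) : ℝ := traceNorm (ρ - σ) / 2

/-- The fidelity `F(ρ,σ) = ‖√ρ √σ‖₁`. -/
def fid {ρ σ : Matrix m m ℂ} (hρ : ρ.PosSemidef) (hσ : σ.PosSemidef) : ℝ :=
  traceNorm (hρ.sqrt * hσ.sqrt)

/-- The sign function applied to a Hermitian matrix via its spectral decomposition. -/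
def signMat {A : Matrix m m ℂ} (hA : A.IsHermitian) : Matrix m m ℂ :=
  hA.cfc (fun x => Real.sign x)

/-- The outer product `|ψ⟩⟨φ|`. -/
def outer (ψ φ : m → ℂ) : Matrix m m ℂ := Matrix.vecMulVec ψ (star φ)

variable {α β : Type*} [Fintype α] [DecidableEq α] [Fintype β] [DecidableEq β]

/-- Partial trace over the first (A) factor. -/
def ptraceA (M : Matrix (α × β) (α × β) ℂ) : Matrix β β ℂ :=
  Matrix.of fun r r' => ∑ a, M (a, r) (a, r')

/-- Partial trace over the second (R) factor. -/
def ptraceR (M : Matrix (α × β) (α × β) ℂ) : Matrix α α ℂ :=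
  Matrix.of fun a a' => ∑ r, M (a, r) (a', r)


/-! ### Auxiliary lemmas -/

theorem sum3_swap {γ₁ γ₂ γ₃ : Type*} [Fintype γ₁] [Fintype γ₂] [Fintype γ₃]
    {M : Type*} [AddCommMonoid M] (F : γ₁ → γ₂ → γ₃ → M) :
    ∑ x, ∑ y, ∑ z, F x y z = ∑ z, ∑ x, ∑ y, F x y z := by
  rw [show (∑ x, ∑ y, ∑ z, F x y z) = ∑ p : γ₁ × γ₂, ∑ z, F p.1 p.2 z from
    (Fintype.sum_prod_type (f := fun p : γ₁ × γ₂ => ∑ z, F p.1 p.2 z)).symm]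
  rw [Finset.sum_comm]
  exact Finset.sum_congr rfl fun z _ =>
    Fintype.sum_prod_type (f := fun p : γ₁ × γ₂ => F p.1 p.2 z)

theorem kron_expand (ψ₀ ψ₁ : α × β → ℂ) (M : Matrix β β ℂ) :
    star ψ₀ ⬝ᵥ (((1 : Matrix α α ℂ) ⊗ₖ M).mulVec ψ₁)
      = ∑ rr, ∑ rr', M rr rr' * ∑ a, (starRingEnd ℂ) (ψ₀ (a, rr)) * ψ₁ (a, rr') := by
  simp only [Matrix.mulVec, dotProduct, Fintype.sum_prod_type, Pi.star_apply,
    Matrix.kroneckerMap_apply, Matrix.one_apply, ite_mul, one_mul, zero_mul, mul_ite, mul_zero,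
    Finset.mul_sum]
  have step1 : ∀ (x : α) (x1 : β),
      (∑ x2 : α, ∑ x3 : β, if x = x2 then star (ψ₀ (x, x1)) * (M x1 x3 * ψ₁ (x2, x3)) else 0)
        = ∑ x3 : β, star (ψ₀ (x, x1)) * (M x1 x3 * ψ₁ (x, x3)) := by
    intro x x1
    rw [Finset.sum_comm]
    simp [Finset.sum_ite_eq]
  simp only [step1]
  rw [Finset.sum_comm]
  refine Finset.sum_congr rfl fun r _ => ?_
  conv_lhs => rw [Finset.sum_comm]
  refine Finset.sum_congr rfl fun r' _ => Finset.sum_congr rfl fun a _ => ?_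
  simp only [RCLike.star_def]; ring

theorem bessel_aux {J : Type*} [Fintype J] [DecidableEq J] (L : J → β → ℂ)
    (hL : ∀ j k, star (L j) ⬝ᵥ L k = if j = k then 1 else 0) (x : β → ℂ) :
    ∑ j, ‖∑ rr, (starRingEnd ℂ) (L j rr) * x rr‖ ^ 2 ≤ ∑ rr, ‖x rr‖ ^ 2 := by
  have hON : Orthonormal ℂ (fun j => (WithLp.equiv 2 (β → ℂ)).symm (L j)) := by
    rw [orthonormal_iff_ite]
    intro j k
    have h1 := hL j k
    simp only [dotProduct, Pi.star_apply, RCLike.star_def] at h1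
    simpa [PiLp.inner_apply, WithLp.equiv_symm_apply, PiLp.toLp_apply, RCLike.inner_apply, mul_comm] using h1
  have hb := hON.sum_inner_products_le (s := Finset.univ) ((WithLp.equiv 2 (β → ℂ)).symm x)
  have h1 : ∀ j, (inner ℂ ((WithLp.equiv 2 (β → ℂ)).symm (L j))
      ((WithLp.equiv 2 (β → ℂ)).symm x) : ℂ) = ∑ rr, (starRingEnd ℂ) (L j rr) * x rr := by
    intro j
    simp [PiLp.inner_apply, WithLp.equiv_symm_apply, PiLp.toLp_apply, RCLike.inner_apply, mul_comm]
  have h2 : ‖(WithLp.equiv 2 (β → ℂ)).symm x‖ ^ 2 = ∑ rr, ‖x rr‖ ^ 2 := by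
    rw [PiLp.norm_sq_eq_of_L2]
    simp [WithLp.equiv_symm_apply, PiLp.toLp_apply]
  simp only [h1] at hb
  rw [h2] at hb
  exact hb

/-- error bound for the polynomial approximation of the
singular-value sign transform of `X = Tr_A(|ψ₀⟩⟨ψ₁|)`:
`|⟨ψ₀|(I ⊗ (sgn^(SV)(X) − P^(SV)(X)))|ψ₁⟩| ≤ 2^(r+1)·δ + C·ε`. -/
theorem sign_sv_poly_error
    {r : ℕ} {ρ₀ ρ₁ : Matrix α α ℂ} (h₀ : IsDensity ρ₀) (h₁ : IsDensity ρ₁)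
    (hr₀ : ρ₀.rank ≤ 2 ^ r) (hr₁ : ρ₁.rank ≤ 2 ^ r)
    (ψ₀ ψ₁ : α × β → ℂ)
    (hψ₀unit : star ψ₀ ⬝ᵥ ψ₀ = 1) (hψ₁unit : star ψ₁ ⬝ᵥ ψ₁ = 1)
    (hψ₀ : ptraceR (outer ψ₀ ψ₀) = ρ₀) (hψ₁ : ptraceR (outer ψ₁ ψ₁) = ρ₁)
    {J : Type*} [Fintype J] [DecidableEq J] (s : J → ℝ) (L Rv : J → β → ℂ)
    (hs : ∀ j, 0 ≤ s j)
    (hL : ∀ j k, star (L j) ⬝ᵥ L k = if j = k then 1 else 0)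
    (hR : ∀ j k, star (Rv j) ⬝ᵥ Rv k = if j = k then 1 else 0)
    (hX : ptraceA (outer ψ₀ ψ₁) = ∑ j, (s j : ℂ) • outer (L j) (Rv j))
    {δ ε C : ℝ} (hδ : 0 < δ) (hε : 0 < ε) (hC : 0 < C) (P : Polynomial ℝ)
    (hPodd : ∀ x : ℝ, P.eval (-x) = -P.eval x)
    (hPb : ∀ x ∈ Set.Icc (-1 : ℝ) 1, |P.eval x| ≤ 1)
    (hPs : ∀ x ∈ Set.Ioc δ 1, |1 - P.eval x| ≤ C * ε) :
    ‖(star ψ₀ ⬝ᵥ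
        (((1 : Matrix α α ℂ) ⊗ₖ
          ((∑ j, (Real.sign (s j) : ℂ) • outer (L j) (Rv j)) -
            ∑ j, ((P.eval (s j) : ℝ) : ℂ) • outer (L j) (Rv j))).mulVec ψ₁))‖
      ≤ 2 ^ (r + 1) * δ + C * ε := by
  classical
  set c : J → ℝ := fun j => Real.sign (s j) - P.eval (s j) with hc
  set A : J → α → ℂ := fun j a => ∑ rr, (starRingEnd ℂ) (ψ₀ (a, rr)) * L j rr with hA
  set B : J → α → ℂ := fun j a => ∑ rr, (starRingEnd ℂ) (Rv j rr) * ψ₁ (a, rr) with hB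
  have hXe : ∀ rr rr', (∑ a, (starRingEnd ℂ) (ψ₀ (a, rr)) * ψ₁ (a, rr'))
      = ∑ k, (s k : ℂ) * ((starRingEnd ℂ) (L k rr) * Rv k rr') := by
    intro rr rr'
    have h' : (starRingEnd ℂ) (ptraceA (outer ψ₀ ψ₁) rr rr')
        = (starRingEnd ℂ) ((∑ k, (s k : ℂ) • outer (L k) (Rv k)) rr rr') := by rw [hX]
    simp only [ptraceA, outer, Matrix.of_apply, Matrix.vecMulVec_apply, Pi.star_apply,
      Matrix.sum_apply, Matrix.smul_apply, Pi.smul_apply, smul_eq_mul, map_sum, _root_.map_mul,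
      RCLike.star_def, Complex.conj_conj, Complex.conj_ofReal] at h'
    exact h'
  have hTg : ∀ j, (∑ a, A j a * B j a)
      = ∑ rr, ∑ rr', (L j rr * (starRingEnd ℂ) (Rv j rr'))
          * ∑ a, (starRingEnd ℂ) (ψ₀ (a, rr)) * ψ₁ (a, rr') := by
    intro j
    simp only [hA, hB]
    calc (∑ a, (∑ rr, (starRingEnd ℂ) (ψ₀ (a, rr)) * L j rr)
            * ∑ rr', (starRingEnd ℂ) (Rv j rr') * ψ₁ (a, rr'))
        = ∑ a, ∑ rr, ∑ rr', ((starRingEnd ℂ) (ψ₀ (a, rr)) * L j rr)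
            * ((starRingEnd ℂ) (Rv j rr') * ψ₁ (a, rr')) :=
          Finset.sum_congr rfl fun a _ => Finset.sum_mul_sum _ _ _ _
      _ = ∑ rr, ∑ rr', ∑ a, ((starRingEnd ℂ) (ψ₀ (a, rr)) * L j rr)
            * ((starRingEnd ℂ) (Rv j rr') * ψ₁ (a, rr')) :=
          (sum3_swap fun rr rr' a => ((starRingEnd ℂ) (ψ₀ (a, rr)) * L j rr)
            * ((starRingEnd ℂ) (Rv j rr') * ψ₁ (a, rr'))).symm
      _ = ∑ rr, ∑ rr', (L j rr * (starRingEnd ℂ) (Rv j rr'))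
            * ∑ a, (starRingEnd ℂ) (ψ₀ (a, rr)) * ψ₁ (a, rr') := by
          refine Finset.sum_congr rfl fun rr _ => Finset.sum_congr rfl fun rr' _ => ?_
          rw [Finset.mul_sum]
          exact Finset.sum_congr rfl fun a _ => by ring
  have hT : ∀ j, (∑ a, A j a * B j a) = ((s j : ℝ) : ℂ) := by
    intro j
    rw [hTg j]
    calc (∑ rr, ∑ rr', (L j rr * (starRingEnd ℂ) (Rv j rr'))
            * ∑ a, (starRingEnd ℂ) (ψ₀ (a, rr)) * ψ₁ (a, rr'))
        = ∑ rr, ∑ rr', ∑ k, (s k : ℂ) * (((starRingEnd ℂ) (L k rr) * L j rr)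
            * ((starRingEnd ℂ) (Rv j rr') * Rv k rr')) := by
          refine Finset.sum_congr rfl fun rr _ => Finset.sum_congr rfl fun rr' _ => ?_
          rw [hXe rr rr', Finset.mul_sum]
          exact Finset.sum_congr rfl fun k _ => by ring
      _ = ∑ k, ∑ rr, ∑ rr', (s k : ℂ) * (((starRingEnd ℂ) (L k rr) * L j rr)
            * ((starRingEnd ℂ) (Rv j rr') * Rv k rr')) :=
          sum3_swap _
      _ = ∑ k, (s k : ℂ) * ((∑ rr, (starRingEnd ℂ) (L k rr) * L j rr)
            * (∑ rr', (starRingEnd ℂ) (Rv j rr') * Rv k rr')) := by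
          refine Finset.sum_congr rfl fun k _ => ?_
          conv_rhs => rw [Finset.sum_mul_sum]
          simp only [Finset.mul_sum]
      _ = ∑ k, (s k : ℂ) * ((if k = j then 1 else 0) * (if j = k then 1 else 0)) := by
          refine Finset.sum_congr rfl fun k _ => ?_
          have h1 := hL k j
          have h2 := hR j k
          simp only [dotProduct, Pi.star_apply, RCLike.star_def] at h1 h2
          rw [h1, h2]
      _ = ((s j : ℝ) : ℂ) := by
          rw [Fintype.sum_eq_single j (fun k hk => by simp [hk, Ne.symm hk])]
          simp
  have hval : star ψ₀ ⬝ᵥ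
        (((1 : Matrix α α ℂ) ⊗ₖ
          ((∑ j, (Real.sign (s j) : ℂ) • outer (L j) (Rv j)) -
            ∑ j, ((P.eval (s j) : ℝ) : ℂ) • outer (L j) (Rv j))).mulVec ψ₁)
      = ∑ j, ((c j : ℝ) : ℂ) * ((s j : ℝ) : ℂ) := by
    have hM : ((∑ j, (Real.sign (s j) : ℂ) • outer (L j) (Rv j)) -
            ∑ j, ((P.eval (s j) : ℝ) : ℂ) • outer (L j) (Rv j))
        = ∑ j, ((c j : ℝ) : ℂ) • outer (L j) (Rv j) := by
      rw [← Finset.sum_sub_distrib]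
      refine Finset.sum_congr rfl fun j _ => ?_
      simp only [hc]
      push_cast
      rw [sub_smul]
    rw [hM, kron_expand]
    calc (∑ rr, ∑ rr', (∑ j, ((c j : ℝ) : ℂ) • outer (L j) (Rv j)) rr rr'
            * ∑ a, (starRingEnd ℂ) (ψ₀ (a, rr)) * ψ₁ (a, rr'))
        = ∑ rr, ∑ rr', ∑ j, ((c j : ℝ) : ℂ) * ((L j rr * (starRingEnd ℂ) (Rv j rr'))
            * ∑ a, (starRingEnd ℂ) (ψ₀ (a, rr)) * ψ₁ (a, rr')) := by
          refine Finset.sum_congr rfl fun rr _ => Finset.sum_congr rfl fun rr' _ => ?_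
          simp only [Matrix.sum_apply, Matrix.smul_apply, outer, Matrix.vecMulVec_apply,
            Pi.star_apply, smul_eq_mul, RCLike.star_def, Finset.sum_mul]
          exact Finset.sum_congr rfl fun j _ => by ring
      _ = ∑ j, ∑ rr, ∑ rr', ((c j : ℝ) : ℂ) * ((L j rr * (starRingEnd ℂ) (Rv j rr'))
            * ∑ a, (starRingEnd ℂ) (ψ₀ (a, rr)) * ψ₁ (a, rr')) := sum3_swap _
      _ = ∑ j, ((c j : ℝ) : ℂ) * ((s j : ℝ) : ℂ) := by
          refine Finset.sum_congr rfl fun j _ => ?_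
          simp only [← Finset.mul_sum]
          rw [← hTg j, hT j]
  have hn0 : ∑ a, ∑ rr, ‖ψ₀ (a, rr)‖ ^ 2 = 1 := by
    have h' : (star ψ₀ ⬝ᵥ ψ₀) = ((∑ a, ∑ rr, ‖ψ₀ (a, rr)‖ ^ 2 : ℝ) : ℂ) := by
      simp only [dotProduct, Pi.star_apply, RCLike.star_def, Fintype.sum_prod_type]
      push_cast
      refine Finset.sum_congr rfl fun a _ => Finset.sum_congr rfl fun rr _ => ?_
      rw [mul_comm, Complex.mul_conj']
    rw [hψ₀unit] at h'
    exact_mod_cast h'.symm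
  have hn1 : ∑ a, ∑ rr, ‖ψ₁ (a, rr)‖ ^ 2 = 1 := by
    have h' : (star ψ₁ ⬝ᵥ ψ₁) = ((∑ a, ∑ rr, ‖ψ₁ (a, rr)‖ ^ 2 : ℝ) : ℂ) := by
      simp only [dotProduct, Pi.star_apply, RCLike.star_def, Fintype.sum_prod_type]
      push_cast
      refine Finset.sum_congr rfl fun a _ => Finset.sum_congr rfl fun rr _ => ?_
      rw [mul_comm, Complex.mul_conj']
    rw [hψ₁unit] at h'
    exact_mod_cast h'.symm
  have hsum1 : ∑ j, s j ≤ 1 := by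
    have hAnorm : ∀ j a, ‖A j a‖ = ‖∑ rr, (starRingEnd ℂ) (L j rr) * ψ₀ (a, rr)‖ := by
      intro j a
      have : A j a = (starRingEnd ℂ) (∑ rr, (starRingEnd ℂ) (L j rr) * ψ₀ (a, rr)) := by
        simp only [hA, map_sum, _root_.map_mul, Complex.conj_conj]
        exact Finset.sum_congr rfl fun rr _ => by ring
      rw [this, RCLike.norm_conj]
    have besselA : ∀ a, ∑ j, ‖A j a‖ ^ 2 ≤ ∑ rr, ‖ψ₀ (a, rr)‖ ^ 2 := by
      intro a
      simpa only [hAnorm] using bessel_aux L hL (fun rr => ψ₀ (a, rr))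
    have besselB : ∀ a, ∑ j, ‖B j a‖ ^ 2 ≤ ∑ rr, ‖ψ₁ (a, rr)‖ ^ 2 := by
      intro a
      exact bessel_aux Rv hR (fun rr => ψ₁ (a, rr))
    have hre : ∀ j, s j = ∑ a, (A j a * B j a).re := by
      intro j
      have h' := congrArg Complex.re (hT j)
      simpa [Complex.re_sum] using h'.symm
    calc ∑ j, s j = ∑ j, ∑ a, (A j a * B j a).re := Finset.sum_congr rfl fun j _ => hre j
      _ ≤ ∑ j, ∑ a, (‖A j a‖ ^ 2 + ‖B j a‖ ^ 2) / 2 := by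
          refine Finset.sum_le_sum fun j _ => Finset.sum_le_sum fun a _ => ?_
          have h1 : (A j a * B j a).re ≤ ‖A j a‖ * ‖B j a‖ := by
            calc (A j a * B j a).re ≤ ‖A j a * B j a‖ := Complex.re_le_norm _
              _ = ‖A j a‖ * ‖B j a‖ := by
                  rw [norm_mul]
          have h2 : ‖A j a‖ * ‖B j a‖ ≤ (‖A j a‖ ^ 2 + ‖B j a‖ ^ 2) / 2 := by
            nlinarith [sq_nonneg (‖A j a‖ - ‖B j a‖)]
          linarith
      _ = ((∑ j, ∑ a, ‖A j a‖ ^ 2) + ∑ j, ∑ a, ‖B j a‖ ^ 2) / 2 := by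
          simp only [div_eq_mul_inv, ← Finset.sum_mul, ← Finset.sum_add_distrib]
      _ = ((∑ a, ∑ j, ‖A j a‖ ^ 2) + ∑ a, ∑ j, ‖B j a‖ ^ 2) / 2 := by
          rw [Finset.sum_comm (f := fun j a => ‖A j a‖ ^ 2),
            Finset.sum_comm (f := fun j a => ‖B j a‖ ^ 2)]
      _ ≤ ((∑ a, ∑ rr, ‖ψ₀ (a, rr)‖ ^ 2) + ∑ a, ∑ rr, ‖ψ₁ (a, rr)‖ ^ 2) / 2 := by
          have g1 : (∑ a, ∑ j, ‖A j a‖ ^ 2) ≤ ∑ a, ∑ rr, ‖ψ₀ (a, rr)‖ ^ 2 :=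
            Finset.sum_le_sum fun a _ => besselA a
          have g2 : (∑ a, ∑ j, ‖B j a‖ ^ 2) ≤ ∑ a, ∑ rr, ‖ψ₁ (a, rr)‖ ^ 2 :=
            Finset.sum_le_sum fun a _ => besselB a
          linarith
      _ = 1 := by rw [hn0, hn1]; norm_num
  have hsj1 : ∀ j, s j ≤ 1 := fun j =>
    le_trans (Finset.single_le_sum (fun i _ => hs i) (Finset.mem_univ j)) hsum1
  have hcard : (Finset.univ.filter (fun j => s j ≠ 0)).card ≤ 2 ^ r := by
    have hρ : ρ₀ = (Matrix.of fun a rr => ψ₀ (a, rr)) * (Matrix.of fun a rr => ψ₀ (a, rr))ᴴ := by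
      rw [← hψ₀]
      ext a a'
      simp [ptraceR, outer, Matrix.mul_apply, Matrix.vecMulVec_apply,
        Matrix.conjTranspose_apply, RCLike.star_def]
    have hXf : ptraceA (outer ψ₀ ψ₁)
        = (Matrix.of fun a rr => ψ₀ (a, rr))ᵀ * ((Matrix.of fun a rr => ψ₁ (a, rr))ᴴ)ᵀ := by
      ext rr rr'
      simp [ptraceA, outer, Matrix.mul_apply, Matrix.vecMulVec_apply, Matrix.transpose_apply,
        Matrix.conjTranspose_apply, RCLike.star_def]
    have hrankX : (ptraceA (outer ψ₀ ψ₁)).rank ≤ 2 ^ r := by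
      calc (ptraceA (outer ψ₀ ψ₁)).rank
          = ((Matrix.of fun a rr => ψ₀ (a, rr))ᵀ * ((Matrix.of fun a rr => ψ₁ (a, rr))ᴴ)ᵀ).rank := by
            rw [hXf]
        _ ≤ (Matrix.of fun a rr => ψ₀ (a, rr))ᵀ.rank := Matrix.rank_mul_le_left _ _
        _ = (Matrix.of fun a rr => ψ₀ (a, rr)).rank := Matrix.rank_transpose _
        _ = ((Matrix.of fun a rr => ψ₀ (a, rr)) * (Matrix.of fun a rr => ψ₀ (a, rr))ᴴ).rank :=
            (Matrix.rank_self_mul_conjTranspose _).symm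
        _ = ρ₀.rank := by rw [← hρ]
        _ ≤ 2 ^ r := hr₀
    have hmv : ∀ j, (ptraceA (outer ψ₀ ψ₁)).mulVec (Rv j) = (s j : ℂ) • L j := by
      intro j
      rw [hX]
      funext b
      simp only [Matrix.mulVec, dotProduct, Matrix.sum_apply, Matrix.smul_apply, outer,
        Matrix.vecMulVec_apply, Pi.star_apply, smul_eq_mul, Finset.sum_mul, Pi.smul_apply,
        RCLike.star_def]
      rw [Finset.sum_comm]
      have hone : ∀ k, (∑ y, (s k : ℂ) * (L k b * (starRingEnd ℂ) (Rv k y)) * Rv j y)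
          = (s k : ℂ) * L k b * (if k = j then 1 else 0) := by
        intro k
        have h2 := hR k j
        simp only [dotProduct, Pi.star_apply, RCLike.star_def] at h2
        rw [← h2, Finset.mul_sum]
        exact Finset.sum_congr rfl fun y _ => by ring
      rw [Finset.sum_congr rfl fun k _ => hone k,
        Fintype.sum_eq_single j (fun k hk => by simp [hk])]
      simp
    have hmem : ∀ j : {j // s j ≠ 0}, L j ∈ LinearMap.range (ptraceA (outer ψ₀ ψ₁)).mulVecLin := by
      intro j
      refine ⟨((s j : ℂ))⁻¹ • Rv j, ?_⟩
      rw [Matrix.mulVecLin_apply, Matrix.mulVec_smul, hmv j, smul_smul,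
        inv_mul_cancel₀ (by exact_mod_cast j.2), one_smul]
    have hON : Orthonormal ℂ (fun j => (WithLp.equiv 2 (β → ℂ)).symm (L j)) := by
      rw [orthonormal_iff_ite]
      intro j k
      have h1 := hL j k
      simp only [dotProduct, Pi.star_apply, RCLike.star_def] at h1
      simpa [PiLp.inner_apply, WithLp.equiv_symm_apply, PiLp.toLp_apply, RCLike.inner_apply, mul_comm] using h1
    have hLI : LinearIndependent ℂ (fun j : {j // s j ≠ 0} => L j) :=
      LinearIndependent.of_comp (WithLp.linearEquiv 2 ℂ (β → ℂ)).symm.toLinearMap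
        (hON.comp Subtype.val Subtype.coe_injective).linearIndependent
    have hLIW : LinearIndependent ℂ
        (fun j : {j // s j ≠ 0} =>
          (⟨L j, hmem j⟩ : LinearMap.range (ptraceA (outer ψ₀ ψ₁)).mulVecLin)) := by
      apply LinearIndependent.of_comp (LinearMap.range (ptraceA (outer ψ₀ ψ₁)).mulVecLin).subtype
      exact hLI
    have hcard' := hLIW.fintype_card_le_finrank
    calc (Finset.univ.filter (fun j => s j ≠ 0)).card
        = Fintype.card {j // s j ≠ 0} := (Fintype.card_subtype _).symm
      _ ≤ Module.finrank ℂ (LinearMap.range (ptraceA (outer ψ₀ ψ₁)).mulVecLin) := hcard'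
      _ = (ptraceA (outer ψ₀ ψ₁)).rank := rfl
      _ ≤ 2 ^ r := hrankX
  rw [hval]
  have hcast : (∑ j, ((c j : ℝ) : ℂ) * ((s j : ℝ) : ℂ)) = ((∑ j, c j * s j : ℝ) : ℂ) := by
    push_cast; rfl
  rw [hcast, Complex.norm_real, Real.norm_eq_abs]
  have key : ∑ j, |c j| * s j ≤ 2 ^ (r + 1) * δ + C * ε := by
    rw [← Finset.sum_filter_add_sum_filter_not Finset.univ (fun j => δ < s j)]
    have hbig : ∑ j ∈ Finset.univ.filter (fun j => δ < s j), |c j| * s j ≤ C * ε := by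
      have hper : ∀ j ∈ Finset.univ.filter (fun j => δ < s j), |c j| * s j ≤ (C * ε) * s j := by
        intro j hj
        rw [Finset.mem_filter] at hj
        have h1 : Real.sign (s j) = 1 := Real.sign_of_pos (lt_trans hδ hj.2)
        have h2 := hPs (s j) ⟨hj.2, hsj1 j⟩
        have h3 : |c j| ≤ C * ε := by rw [hc]; simpa [h1] using h2
        exact mul_le_mul_of_nonneg_right h3 (hs j)
      calc ∑ j ∈ Finset.univ.filter (fun j => δ < s j), |c j| * s j
          ≤ ∑ j ∈ Finset.univ.filter (fun j => δ < s j), (C * ε) * s j :=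
            Finset.sum_le_sum hper
        _ = (C * ε) * ∑ j ∈ Finset.univ.filter (fun j => δ < s j), s j := by
            rw [Finset.mul_sum]
        _ ≤ (C * ε) * 1 := by
            refine mul_le_mul_of_nonneg_left ?_ (by positivity)
            refine le_trans (Finset.sum_le_sum_of_subset_of_nonneg (Finset.filter_subset _ _)
              (fun j _ _ => hs j)) hsum1
        _ = C * ε := mul_one _
    have hsmall : ∑ j ∈ Finset.univ.filter (fun j => ¬ δ < s j), |c j| * s j
        ≤ 2 ^ (r + 1) * δ := by
      have e1 : ∑ j ∈ Finset.univ.filter (fun j => ¬ δ < s j), |c j| * s j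
          = ∑ j ∈ (Finset.univ.filter (fun j => ¬ δ < s j)).filter (fun j => s j ≠ 0),
              |c j| * s j := by
        symm
        apply Finset.sum_filter_of_ne
        intro j _ hne
        intro h0
        exact hne (by rw [h0, mul_zero])
      have hper : ∀ j ∈ (Finset.univ.filter (fun j => ¬ δ < s j)).filter (fun j => s j ≠ 0),
          |c j| * s j ≤ 2 * δ := by
        intro j hj
        simp only [Finset.mem_filter, Finset.mem_univ, true_and] at hj
        have hm1 : -1 ≤ s j := le_trans (by norm_num) (hs j)
        have hb1 : |Real.sign (s j)| ≤ 1 := by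
          rcases lt_trichotomy (s j) 0 with h | h | h
          · rw [Real.sign_of_neg h]; norm_num
          · rw [h, Real.sign_zero]; norm_num
          · rw [Real.sign_of_pos h]; norm_num
        have hb2 : |P.eval (s j)| ≤ 1 := hPb (s j) ⟨hm1, hsj1 j⟩
        have hb3 : |c j| ≤ 2 := by
          rw [hc]
          calc |Real.sign (s j) - P.eval (s j)| ≤ |Real.sign (s j)| + |P.eval (s j)| :=
            abs_sub _ _
            _ ≤ 2 := by linarith
        have : s j ≤ δ := not_lt.mp hj.1
        calc |c j| * s j ≤ 2 * s j := mul_le_mul_of_nonneg_right hb3 (hs j)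
          _ ≤ 2 * δ := by linarith
      have hsub : (Finset.univ.filter (fun j => ¬ δ < s j)).filter (fun j => s j ≠ 0)
          ⊆ Finset.univ.filter (fun j => s j ≠ 0) := by
        intro j hj
        simp only [Finset.mem_filter, Finset.mem_univ, true_and] at hj ⊢
        exact hj.2
      calc ∑ j ∈ Finset.univ.filter (fun j => ¬ δ < s j), |c j| * s j
          = ∑ j ∈ (Finset.univ.filter (fun j => ¬ δ < s j)).filter (fun j => s j ≠ 0),
              |c j| * s j := e1
        _ ≤ ∑ _j ∈ (Finset.univ.filter (fun j => ¬ δ < s j)).filter (fun j => s j ≠ 0),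
              2 * δ := Finset.sum_le_sum hper
        _ = ((Finset.univ.filter (fun j => ¬ δ < s j)).filter (fun j => s j ≠ 0)).card
              * (2 * δ) := by rw [Finset.sum_const, nsmul_eq_mul]
        _ ≤ (2 ^ r : ℕ) * (2 * δ) := by
            refine mul_le_mul_of_nonneg_right ?_ (by positivity)
            exact_mod_cast le_trans (Finset.card_le_card hsub) hcard
        _ = 2 ^ (r + 1) * δ := by push_cast; rw [pow_succ]; ring
    linarith
  calc |∑ j, c j * s j| ≤ ∑ j, |c j * s j| := Finset.abs_sum_le_sum_abs _ _
    _ = ∑ j, |c j| * s j := Finset.sum_congr rfl fun j _ => by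
        rw [abs_mul, abs_of_nonneg (hs j)]
    _ ≤ 2 ^ (r + 1) * δ + C * ε := key
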